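/- Let a and b be positive integers. The sequence (1, a, b) is a pure O-sequence if and only if ⌈a/2⌉ ≤ b ≤ a(a+1)/2. -/

import Mathlib

/-- The degree of a monomial (exponent vector) in `s` variables. -/
def mdeg {s : ℕ} (u : Fin s → ℕ) : ℕ := ∑ i, u i

/-- A (nonempty, finite) set of monomials is an order ideal if it is closed
under divisibility (componentwise `≤` of exponent vectors). -/
def IsOrderIdeal {s : ℕ} (A : Finset (Fin s → ℕ)) : Prop :=
  A.Nonempty ∧ ∀ u ∈ A, ∀ v : Fin s → ℕ, v ≤ u → v ∈ A

/-- `u` is a maximal element of `A` with respect to divisibility. -/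
def IsMaximalIn {s : ℕ} (A : Finset (Fin s → ℕ)) (u : Fin s → ℕ) : Prop :=
  u ∈ A ∧ ∀ v ∈ A, u ≤ v → v = u

/-- An order ideal is pure if all its maximal monomials have the same degree. -/
def IsPure {s : ℕ} (A : Finset (Fin s → ℕ)) : Prop :=
  ∀ u v : Fin s → ℕ, IsMaximalIn A u → IsMaximalIn A v → mdeg u = mdeg v

/-- The maximal degree of a monomial in `A`. -/
def topDegree {s : ℕ} (A : Finset (Fin s → ℕ)) : ℕ := A.sup mdeg

/-- The number of monomials of degree `i` in `A`. -/
def hVec {s : ℕ} (A : Finset (Fin s → ℕ)) (i : ℕ) : ℕ :=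
  (A.filter (fun u => mdeg u = i)).card

/-- The h-vector `(h_0, h_1, ..., h_n)` of `A`, where `n = topDegree A`. -/
def hVector {s : ℕ} (A : Finset (Fin s → ℕ)) : List ℕ :=
  (List.range (topDegree A + 1)).map (hVec A)

/-- A finite sequence is a pure O-sequence if it is the h-vector of some
pure order ideal of monomials. -/
def IsPureOSequence (h : List ℕ) : Prop :=
  ∃ (s : ℕ) (A : Finset (Fin s → ℕ)), IsOrderIdeal A ∧ IsPure A ∧ hVector A = h

/-!
Necessity: in a pure order ideal of top degree 2 every variable divides a maximal monomial, which
has degree 2 and so is divisible by at most two variables; hence a ≤ 2b. Every quadratic monomial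
of an order ideal is a product of two of its variables, so b ≤ a(a+1)/2.

Sufficiency: the order ideal generated by b quadratic monomials in a variables that together
involve every variable is pure with h-vector (1, a, b). Such a family is obtained by extending the
pairing x₀x₁, x₂x₃, … (⌈a/2⌉ monomials) by further quadratic monomials, of which there are
a(a+1)/2 in all.
-/

section Monomial

variable {s : ℕ}

lemma mdeg_add (u v : Fin s → ℕ) : mdeg (u + v) = mdeg u + mdeg v :=
  Finset.sum_add_distrib

@[simp]
lemma mdeg_single (i : Fin s) (n : ℕ) : mdeg (Pi.single i n) = n := by
  simp [mdeg]

lemma mdeg_mono : Monotone (mdeg (s := s)) :=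
  fun _ _ h => Finset.sum_le_sum fun i _ => h i

lemma mdeg_tsub {u v : Fin s → ℕ} (h : u ≤ v) : mdeg (v - u) = mdeg v - mdeg u := by
  rw [eq_tsub_iff_add_eq_of_le (mdeg_mono h), ← mdeg_add, tsub_add_cancel_of_le h]

lemma mdeg_eq_zero_iff {u : Fin s → ℕ} : mdeg u = 0 ↔ u = 0 := by
  simp [mdeg, Finset.sum_eq_zero_iff, funext_iff]

lemma eq_of_le_of_mdeg_le {u v : Fin s → ℕ} (h : u ≤ v) (hd : mdeg v ≤ mdeg u) : u = v := by
  have : v - u = 0 := mdeg_eq_zero_iff.1 (by rw [mdeg_tsub h]; omega)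
  exact le_antisymm h (tsub_eq_zero_iff_le.1 this)

lemma single_one_le_iff {i : Fin s} {u : Fin s → ℕ} : Pi.single i 1 ≤ u ↔ 0 < u i := by
  refine ⟨fun h => (by simpa using h i : 1 ≤ u i), fun h j => ?_⟩
  rcases eq_or_ne j i with rfl | hj
  · simpa [Nat.one_le_iff_ne_zero, Nat.pos_iff_ne_zero] using h
  · simp [hj]

lemma exists_single_le_of_mdeg_pos {u : Fin s → ℕ} (h : 0 < mdeg u) : ∃ i, Pi.single i 1 ≤ u := by
  obtain ⟨i, -, hi⟩ := Finset.exists_ne_zero_of_sum_ne_zero h.ne'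
  exact ⟨i, single_one_le_iff.2 (Nat.pos_of_ne_zero hi)⟩

lemma mdeg_eq_one_iff {u : Fin s → ℕ} : mdeg u = 1 ↔ ∃ i, u = Pi.single i 1 := by
  refine ⟨fun h => ?_, by rintro ⟨i, rfl⟩; exact mdeg_single i 1⟩
  obtain ⟨i, hi⟩ := exists_single_le_of_mdeg_pos (h ▸ Nat.one_pos)
  exact ⟨i, (eq_of_le_of_mdeg_le hi (by simp [h])).symm⟩

lemma single_one_injective : Function.Injective fun i : Fin s => (Pi.single i 1 : Fin s → ℕ) := by
  intro i j h
  simpa [Pi.single_apply, eq_comm] using congrFun h i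

lemma exists_add_eq_of_mdeg_eq_two {w : Fin s → ℕ} (h : mdeg w = 2) :
    ∃ u v, mdeg u = 1 ∧ mdeg v = 1 ∧ u + v = w := by
  obtain ⟨i, hi⟩ := exists_single_le_of_mdeg_pos (h ▸ Nat.two_pos)
  exact ⟨_, w - Pi.single i 1, mdeg_single i 1, by rw [mdeg_tsub hi, h, mdeg_single],
    add_tsub_cancel_of_le hi⟩

lemma card_support_le_mdeg (w : Fin s → ℕ) : (Finset.univ.filter (0 < w ·)).card ≤ mdeg w :=
  calc (Finset.univ.filter (0 < w ·)).card
      ≤ ∑ i ∈ Finset.univ.filter (0 < w ·), w i := by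
        rw [Finset.card_eq_sum_ones]
        exact Finset.sum_le_sum fun i hi => (Finset.mem_filter.1 hi).2
    _ ≤ mdeg w := Finset.sum_le_sum_of_subset (Finset.filter_subset _ _)

/-- `u ↦ w - u` injects the lower covers of `w` into the variables dividing `w`. -/
lemma card_lowerCovers_le_mdeg {T : Finset (Fin s → ℕ)} {w : Fin s → ℕ}
    (hT : ∀ u ∈ T, u ≤ w ∧ mdeg u + 1 = mdeg w) : T.card ≤ mdeg w := by
  have hmaps : ∀ u ∈ T, w - u ∈ (Finset.univ.filter (0 < w ·)).image (Pi.single · 1) := by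
    intro u hu
    obtain ⟨hle, hdeg⟩ := hT u hu
    obtain ⟨i, hi⟩ := mdeg_eq_one_iff.1 (by rw [mdeg_tsub hle]; omega)
    have hwi : (w - u) i = 1 := by rw [hi]; simp
    exact Finset.mem_image.2 ⟨i, Finset.mem_filter.2 ⟨Finset.mem_univ i, by
      simp only [Pi.sub_apply] at hwi; omega⟩, hi.symm⟩
  have hinj : Set.InjOn (w - ·) T := by
    intro u hu v hv huv
    funext k
    have := congrFun huv k
    have := (hT u hu).1 k
    have := (hT v hv).1 k
    simp only [Pi.sub_apply] at *
    omega
  calc T.card ≤ ((Finset.univ.filter (0 < w ·)).image (Pi.single · 1)).card :=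
        Finset.card_le_card_of_injOn _ hmaps hinj
    _ ≤ mdeg w := Finset.card_image_le.trans (card_support_le_mdeg w)

end Monomial

section Sym2Monomial

variable {s : ℕ}

/-- `s(i, j)` is the quadratic monomial `xᵢ xⱼ`. -/
def monomialOfSym2 : Sym2 (Fin s) → (Fin s → ℕ) :=
  Sym2.lift ⟨fun i j => Pi.single i 1 + Pi.single j 1, fun _ _ => add_comm _ _⟩

@[simp]
lemma monomialOfSym2_mk (i j : Fin s) :
    monomialOfSym2 s(i, j) = Pi.single i 1 + Pi.single j 1 := rfl

lemma mdeg_monomialOfSym2 (z : Sym2 (Fin s)) : mdeg (monomialOfSym2 z) = 2 := by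
  induction z using Sym2.ind
  simp [mdeg_add]

lemma monomialOfSym2_pos_iff {k : Fin s} {z : Sym2 (Fin s)} : 0 < monomialOfSym2 z k ↔ k ∈ z := by
  induction z using Sym2.ind
  simp [Pi.single_apply, Nat.pos_iff_ne_zero]

lemma monomialOfSym2_injective : Function.Injective (monomialOfSym2 (s := s)) :=
  fun z z' h => Sym2.ext fun k => by rw [← monomialOfSym2_pos_iff, h, monomialOfSym2_pos_iff]

end Sym2Monomial

section OrderIdeal

variable {s : ℕ} {A : Finset (Fin s → ℕ)}

lemma exists_le_isMaximalIn {u : Fin s → ℕ} (hu : u ∈ A) : ∃ m, u ≤ m ∧ IsMaximalIn A m := by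
  obtain ⟨m, hum, hm⟩ := A.finite_toSet.exists_le_maximal hu
  exact ⟨m, hum, hm.1, fun v hv hmv => le_antisymm (hm.2 hv hmv) hmv⟩

lemma mdeg_le_topDegree {u : Fin s → ℕ} (hu : u ∈ A) : mdeg u ≤ topDegree A :=
  Finset.le_sup hu

lemma IsPure.mdeg_eq_topDegree (hP : IsPure A) {m : Fin s → ℕ} (hm : IsMaximalIn A m) :
    mdeg m = topDegree A := by
  obtain ⟨w, hw, hwd⟩ := Finset.exists_mem_eq_sup A ⟨m, hm.1⟩ mdeg
  obtain ⟨m', hwm', hm'⟩ := exists_le_isMaximalIn hw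
  rw [hP m m' hm hm']
  exact le_antisymm (mdeg_le_topDegree hm'.1) (by rw [topDegree, hwd]; exact mdeg_mono hwm')

lemma IsPure.hVec_le_mul_hVec_succ (hP : IsPure A) {n : ℕ} (hn : topDegree A = n + 1) :
    hVec A n ≤ (n + 1) * hVec A (n + 1) := by
  classical
  have key := Finset.card_mul_le_card_mul (· ≤ ·) (m := 1) (n := n + 1)
    (s := A.filter (mdeg · = n)) (t := A.filter (mdeg · = n + 1)) ?_ ?_
  · simpa [hVec, mul_comm] using key
  · intro u hu
    obtain ⟨hu, -⟩ := Finset.mem_filter.1 hu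
    obtain ⟨m, hum, hm⟩ := exists_le_isMaximalIn hu
    exact Finset.one_le_card.2 ⟨m, Finset.mem_filter.2
      ⟨Finset.mem_filter.2 ⟨hm.1, hn ▸ hP.mdeg_eq_topDegree hm⟩, hum⟩⟩
  · intro w hw
    rw [← (Finset.mem_filter.1 hw).2]
    exact card_lowerCovers_le_mdeg fun u hu => by
      simp only [Finset.bipartiteBelow, Finset.mem_filter] at hu hw
      exact ⟨hu.2, by omega⟩

lemma hVec_two_le_choose (hA : IsOrderIdeal A) : hVec A 2 ≤ (hVec A 1 + 1).choose 2 := by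
  let add : Sym2 (Fin s → ℕ) → (Fin s → ℕ) := Sym2.lift ⟨(· + ·), add_comm⟩
  calc hVec A 2 ≤ ((A.filter (mdeg · = 1)).sym2.image add).card := by
        refine Finset.card_le_card fun w hw => ?_
        obtain ⟨hwA, hw⟩ := Finset.mem_filter.1 hw
        obtain ⟨u, v, hu, hv, rfl⟩ := exists_add_eq_of_mdeg_eq_two hw
        refine Finset.mem_image.2 ⟨s(u, v), Finset.mk_mem_sym2_iff.2 ⟨?_, ?_⟩, rfl⟩
        · exact Finset.mem_filter.2 ⟨hA.2 _ hwA u le_self_add, hu⟩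
        · exact Finset.mem_filter.2 ⟨hA.2 _ hwA v le_add_self, hv⟩
    _ ≤ (hVec A 1 + 1).choose 2 := Finset.card_image_le.trans (Finset.card_sym2 _).le

lemma hVec_zero (hA : IsOrderIdeal A) : hVec A 0 = 1 := by
  obtain ⟨u, hu⟩ := hA.1
  have : A.filter (mdeg · = 0) = {0} := by
    ext v
    simp only [Finset.mem_filter, Finset.mem_singleton, mdeg_eq_zero_iff]
    exact ⟨And.right, fun hv => ⟨hv ▸ hA.2 u hu 0 (fun i => Nat.zero_le (u i)), hv⟩⟩
  rw [hVec, this, Finset.card_singleton]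

lemma hVec_one_of_forall_single_mem (h : ∀ i, Pi.single i 1 ∈ A) : hVec A 1 = s := by
  have : A.filter (mdeg · = 1) = Finset.univ.image (Pi.single · 1) := by
    ext v
    simp only [Finset.mem_filter, mdeg_eq_one_iff, Finset.mem_image, Finset.mem_univ, true_and]
    constructor
    · exact fun ⟨_, i, hi⟩ => ⟨i, hi.symm⟩
    · rintro ⟨i, rfl⟩
      exact ⟨h i, i, rfl⟩
  rw [hVec, this, Finset.card_image_of_injective _ single_one_injective, Finset.card_univ,
    Fintype.card_fin]

end OrderIdeal

lemma hVector_eq_triple_iff {s : ℕ} {A : Finset (Fin s → ℕ)} {x y z : ℕ} :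
    hVector A = [x, y, z] ↔ topDegree A = 2 ∧ hVec A 0 = x ∧ hVec A 1 = y ∧ hVec A 2 = z := by
  constructor
  · intro h
    have htop : topDegree A = 2 := by simpa [hVector] using congrArg List.length h
    rw [hVector, htop] at h
    simp_all [List.range_succ]
  · rintro ⟨htop, h0, h1, h2⟩
    simp [hVector, htop, List.range_succ, h0, h1, h2]

lemma le_of_isPureOSequence {a b : ℕ} (h : IsPureOSequence [1, a, b]) :
    (a + 1) / 2 ≤ b ∧ b ≤ a * (a + 1) / 2 := by
  obtain ⟨s, A, hA, hP, hh⟩ := h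
  obtain ⟨htop, -, rfl, rfl⟩ := hVector_eq_triple_iff.1 hh
  have hlower : hVec A 1 ≤ 2 * hVec A 2 := hP.hVec_le_mul_hVec_succ htop
  have hupper := hVec_two_le_choose hA
  rw [Nat.choose_two_right, Nat.add_sub_cancel, mul_comm] at hupper
  exact ⟨by omega, hupper⟩

section DownClosure

variable {s : ℕ} {G : Finset (Fin s → ℕ)} {n : ℕ}

def downClosure (G : Finset (Fin s → ℕ)) : Finset (Fin s → ℕ) := G.biUnion Finset.Iic

lemma mem_downClosure {u : Fin s → ℕ} : u ∈ downClosure G ↔ ∃ g ∈ G, u ≤ g := by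
  simp [downClosure]

lemma isOrderIdeal_downClosure (hG : G.Nonempty) : IsOrderIdeal (downClosure G) := by
  refine ⟨hG.biUnion fun g _ => Finset.nonempty_Iic, fun u hu v hvu => ?_⟩
  obtain ⟨g, hg, hug⟩ := mem_downClosure.1 hu
  exact mem_downClosure.2 ⟨g, hg, hvu.trans hug⟩

lemma mdeg_le_of_mem_downClosure (hG : ∀ g ∈ G, mdeg g = n) {u : Fin s → ℕ}
    (hu : u ∈ downClosure G) : mdeg u ≤ n := by
  obtain ⟨g, hg, hug⟩ := mem_downClosure.1 hu
  exact hG g hg ▸ mdeg_mono hug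

lemma filter_mdeg_downClosure (hG : ∀ g ∈ G, mdeg g = n) :
    (downClosure G).filter (mdeg · = n) = G := by
  ext u
  simp only [Finset.mem_filter, mem_downClosure]
  constructor
  · rintro ⟨⟨g, hg, hug⟩, hu⟩
    rwa [eq_of_le_of_mdeg_le hug (by rw [hu, hG g hg])]
  · exact fun hu => ⟨⟨u, hu, le_rfl⟩, hG u hu⟩

lemma isPure_downClosure (hG : ∀ g ∈ G, mdeg g = n) : IsPure (downClosure G) := by
  have hmax : ∀ m, IsMaximalIn (downClosure G) m → mdeg m = n := by
    rintro m ⟨hm, hmax⟩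
    obtain ⟨g, hg, hmg⟩ := mem_downClosure.1 hm
    rw [← hmax g (mem_downClosure.2 ⟨g, hg, le_rfl⟩) hmg, hG g hg]
  exact fun u v hu hv => (hmax u hu).trans (hmax v hv).symm

lemma topDegree_downClosure (hG : ∀ g ∈ G, mdeg g = n) (hne : G.Nonempty) :
    topDegree (downClosure G) = n := by
  obtain ⟨g, hg⟩ := hne
  refine le_antisymm (Finset.sup_le fun u hu => mdeg_le_of_mem_downClosure hG hu) ?_
  exact hG g hg ▸ mdeg_le_topDegree (mem_downClosure.2 ⟨g, hg, le_rfl⟩)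

end DownClosure

lemma isPureOSequence_of_sym2_cover {s : ℕ} (S : Finset (Sym2 (Fin s)))
    (hcover : ∀ i, ∃ z ∈ S, i ∈ z) (hne : S.Nonempty) : IsPureOSequence [1, s, S.card] := by
  set G := S.image monomialOfSym2
  have hG : ∀ g ∈ G, mdeg g = 2 := by
    simp only [G, Finset.mem_image]
    rintro g ⟨z, -, rfl⟩
    exact mdeg_monomialOfSym2 z
  have hsingle : ∀ i, Pi.single i 1 ∈ downClosure G := fun i => by
    obtain ⟨z, hz, hiz⟩ := hcover i
    exact mem_downClosure.2 ⟨_, Finset.mem_image_of_mem _ hz,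
      single_one_le_iff.2 (monomialOfSym2_pos_iff.2 hiz)⟩
  have hA := isOrderIdeal_downClosure (hne.image monomialOfSym2)
  refine ⟨s, downClosure G, hA, isPure_downClosure hG, hVector_eq_triple_iff.2
    ⟨topDegree_downClosure hG (hne.image _), hVec_zero hA, hVec_one_of_forall_single_mem hsingle, ?_⟩⟩
  rw [hVec, filter_mdeg_downClosure hG, Finset.card_image_of_injective _ monomialOfSym2_injective]

lemma exists_sym2_cover (a : ℕ) :
    ∃ M : Finset (Sym2 (Fin a)), M.card ≤ (a + 1) / 2 ∧ ∀ i, ∃ z ∈ M, i ∈ z := by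
  -- the pairs {0, 1}, {2, 3}, ..., closed off by {a - 1, a - 1} when a is odd
  let pair : Fin ((a + 1) / 2) → Sym2 (Fin a) := fun m =>
    s(⟨2 * m, by omega⟩, ⟨min (2 * m + 1) (a - 1), by omega⟩)
  refine ⟨Finset.univ.image pair, Finset.card_image_le.trans (by simp), fun i =>
    ⟨pair ⟨i / 2, by omega⟩, Finset.mem_image_of_mem _ (Finset.mem_univ _), ?_⟩⟩
  simp only [pair, Sym2.mem_iff, Fin.ext_iff]
  omega

lemma isPureOSequence_of_le {a b : ℕ} (hb : 0 < b) (hlower : (a + 1) / 2 ≤ b)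
    (hupper : b ≤ a * (a + 1) / 2) : IsPureOSequence [1, a, b] := by
  obtain ⟨M, hM, hcover⟩ := exists_sym2_cover a
  have hcard : (Finset.univ : Finset (Sym2 (Fin a))).card = a * (a + 1) / 2 := by
    rw [Finset.card_univ, Sym2.card, Fintype.card_fin, Nat.choose_two_right, Nat.add_sub_cancel,
      mul_comm]
  obtain ⟨S, hMS, -, rfl⟩ := Finset.exists_subsuperset_card_eq (Finset.subset_univ M)
    (hM.trans hlower) (hcard ▸ hupper)
  refine isPureOSequence_of_sym2_cover S (fun i => ?_) (Finset.card_pos.1 hb)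
  obtain ⟨z, hz, hiz⟩ := hcover i
  exact ⟨z, hMS hz, hiz⟩

theorem stmt_4_general (a b : ℕ) (hb : 0 < b) :
    IsPureOSequence [1, a, b] ↔ (a + 1) / 2 ≤ b ∧ b ≤ a * (a + 1) / 2 :=
  ⟨le_of_isPureOSequence, fun h => isPureOSequence_of_le hb h.1 h.2⟩

/-- The sequence `(1, a, b)` is a pure O-sequence iff `⌈a/2⌉ ≤ b ≤ a(a+1)/2`. -/
theorem stmt_4 (a b : ℕ) (ha : 0 < a) (hb : 0 < b) :
    IsPureOSequence [1, a, b] ↔ (a + 1) / 2 ≤ b ∧ b ≤ a * (a + 1) / 2 :=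
  stmt_4_general a b hb
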